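/- arXiv:2506.24038 — 3 statements merged into one kernel-verified Lean document; each statement's English description precedes it below -/
import Mathlib

section
/- Let R be a graded-commutative ring and T an R-linear triangulated category. Fix objects G, M ∈ T such that Hom*_T(G,M) is a noetherian R-module, and let x ∈ R be homogeneous. Then for all sufficiently large n, the composition Σ^{-1}(M//x^{n+1}) →^{ε(x^{n+1})} M →^{x^n·id} Σ^{n|x|} M is G-ghost. -/
/-!
Statement 6: Let `R` be a graded-commutative ring and `T` an `R`-linear triangulated
category. Fix `G, M ∈ T` such that `Hom*_T(G,M)` is a noetherian `R`-module, and let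
`x ∈ R` be homogeneous of degree `i`. Then for all sufficiently large `n`, the composition
`Σ⁻¹(M//x^{n+1}) → M → Σ^{n|x|} M` of the defining map of the Koszul object with
`x^n ⬝ id_M` is `G`-ghost.
-/

open CategoryTheory Limits Pretriangulated
open scoped DirectSum

universe v u

/-- A ℤ-graded ring is graded-commutative if `x * y = (-1)^{|x| |y|} y * x`
for homogeneous elements `x`, `y`. -/
def IsGradedComm (R : Type*) [Ring R] (𝒜 : ℤ → AddSubgroup R) : Prop :=
  ∀ (i j : ℤ) (x y : R), x ∈ 𝒜 i → y ∈ 𝒜 j →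
    x * y = if Even (i * j) then y * x else -(y * x)

section Graded

variable (R : Type*) [Ring R] (𝒜 : ℤ → AddSubgroup R)
variable {T : Type u} [Category.{v} T] [Preadditive T] [HasZeroObject T]
  [HasShift T ℤ] [∀ n : ℤ, (CategoryTheory.shiftFunctor T n).Additive] [Pretriangulated T]

/-- The graded Hom: `Hom*_T(M, N) = ∐_{n ∈ ℤ} Hom_T(M, Σⁿ N)`. -/
abbrev GHom (M N : T) : Type v := ⨁ n : ℤ, (M ⟶ N⟦n⟧)

/-- Composition of homogeneous components of graded Homs:
a degree `n` morphism `M → Σⁿ N` composed with a degree `m` morphism `N → Σᵐ P`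
yields a degree `n + m` morphism `M → Σ^{n+m} P`. -/
noncomputable def hcomp {M N P : T} {n m : ℤ} (f : M ⟶ N⟦n⟧) (g : N ⟶ P⟦m⟧) :
    M ⟶ P⟦n + m⟧ :=
  f ≫ g⟦n⟧' ≫ (shiftFunctorAdd' T m n (n + m) (add_comm m n)).inv.app P

variable (T)

/-- An `R`-linear structure on the triangulated category `T`, for a ℤ-graded ring `R`:
the graded Hom-sets are graded `R`-modules (homogeneous elements of degree `i` map the
degree `n` component to the degree `n + i` component), and composition is `R`-bilinear. -/
structure RLinearStructure where
  /-- the `R`-module structures on the graded Hom-sets -/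
  mod : ∀ M N : T, Module R (GHom M N)
  /-- scalar multiplication by a homogeneous element of degree `i` maps the degree `n`
  component into the degree `n + i` component -/
  degree : ∀ {i : ℤ} {x : R}, x ∈ 𝒜 i → ∀ {M N : T} {n : ℤ} (f : M ⟶ N⟦n⟧) (m : ℤ),
    m ≠ n + i →
      (letI := mod M N; (x • DirectSum.of (fun k => M ⟶ N⟦k⟧) n f) m) = 0
  /-- composition is `R`-linear in the first (inner) variable -/
  comp_smul_left : ∀ {i : ℤ} {x : R}, x ∈ 𝒜 i → ∀ {M N P : T} {n m : ℤ}
    (f : M ⟶ N⟦n⟧) (g : N ⟶ P⟦m⟧),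
      (letI := mod M P; letI := mod M N;
        x • DirectSum.of (fun k => M ⟶ P⟦k⟧) (n + m) (hcomp f g)
          = DirectSum.of (fun k => M ⟶ P⟦k⟧) ((n + i) + m)
              (hcomp ((x • DirectSum.of (fun k => M ⟶ N⟦k⟧) n f) (n + i)) g))
  /-- composition is `R`-linear in the second (outer) variable -/
  comp_smul_right : ∀ {i : ℤ} {x : R}, x ∈ 𝒜 i → ∀ {M N P : T} {n m : ℤ}
    (f : M ⟶ N⟦n⟧) (g : N ⟶ P⟦m⟧),
      (letI := mod M P; letI := mod N P;
        x • DirectSum.of (fun k => M ⟶ P⟦k⟧) (n + m) (hcomp f g)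
          = DirectSum.of (fun k => M ⟶ P⟦k⟧) (n + (m + i))
              (hcomp f ((x • DirectSum.of (fun k => N ⟶ P⟦k⟧) m g) (m + i))))

variable {R 𝒜 T}

/-- The identity of `M`, viewed as the degree `0` element of `Hom*_T(M, M)`. -/
noncomputable def idG (M : T) : GHom M M :=
  DirectSum.of (fun k => M ⟶ M⟦k⟧) 0 ((shiftFunctorZero T ℤ).inv.app M)

/-- The natural morphism `x ⬝ id_M : M ⟶ Σⁱ M` induced by a (homogeneous, degree `i`)
element `x` of `R`. -/
noncomputable def xMul (hL : RLinearStructure R 𝒜 T) (x : R) (i : ℤ) (M : T) : M ⟶ M⟦i⟧ :=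
  letI := hL.mod M M; (x • idG M) i

/-- A morphism `f : M ⟶ N` is `G`-ghost if every composition `Σⁿ G → M → N` vanishes. -/
def IsGhost (G : T) {M N : T} (f : M ⟶ N) : Prop :=
  ∀ (n : ℤ) (g : G⟦n⟧ ⟶ M), g ≫ f = 0

/-- The composition `K_t → K_{t-1} → ⋯ → K_0` of a chain of morphisms. -/
noncomputable def chainComp (K : ℕ → T) (ε : ∀ s : ℕ, K (s + 1) ⟶ K s) :
    ∀ t : ℕ, K t ⟶ K 0
  | 0 => 𝟙 (K 0)
  | t + 1 => ε t ≫ chainComp K ε t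

end Graded

section RegSeq

variable {R : Type*} [Ring R] (N : Type*) [AddCommGroup N] [Module R N]

/-- `S • N`: the submodule of `N` generated by the products `x • ν`, `x ∈ S`, `ν ∈ N`. -/
def smulSetSpan (S : Set R) : Submodule R N :=
  Submodule.span R {ν : N | ∃ x ∈ S, ∃ m : N, ν = x • m}

/-- `x :: xs` is a regular sequence on `N` modulo the submodule `p` if `x` is a
non-zerodivisor on `N/p` and `xs` is regular modulo `p + xN`. -/
def IsRegSeqFrom : Submodule R N → List R → Prop
  | _, [] => True
  | p, x :: xs => (∀ ν : N, x • ν ∈ p → ν ∈ p) ∧ IsRegSeqFrom (p ⊔ smulSetSpan N {x}) xs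

/-- `xs` is a regular sequence on the module `N`: each entry is a non-zerodivisor on the
quotient of `N` by the multiples of the previous entries. -/
def IsRegSeqOn (xs : List R) : Prop := IsRegSeqFrom N ⊥ xs

/-- The depth `depth_R(𝔞, N)` of a graded module `N` (when `𝔞 N ≠ N`): the supremum of the
lengths of the `N`-regular sequences of homogeneous elements contained in `𝔞`. -/
noncomputable def gradedDepth (𝒜 : ℤ → AddSubgroup R) (a : Ideal R) : ℕ∞ :=
  sSup {c : ℕ∞ | ∃ xs : List R,
    (∀ y ∈ xs, y ∈ a ∧ ∃ i : ℤ, y ∈ 𝒜 i) ∧ IsRegSeqOn N xs ∧ c = xs.length}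

end RegSeq

/-! The torsion submodules `{h ∈ Hom*(G, M) | xⁿ h = 0}` (submodules thanks to
graded-commutativity) form an ascending chain, which stabilises since `Hom*(G, M)` is
noetherian. A map `g : ΣᵐG ⟶ K` gives the element `g ≫ ε` of `Hom*(G, M)`, which is killed
by `x^{n+1}` because `ε ≫ x^{n+1} = 0` in the triangle; once the chain is stable it is killed
by `xⁿ`, that is, `g ≫ ε ≫ xⁿ = 0`. -/

section GradedTorsion

variable {R : Type*} [Ring R] {𝒜 : ℤ → AddSubgroup R} [GradedRing 𝒜]
  {N : Type*} [AddCommGroup N] [Module R N]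

theorem IsGradedComm.mul_smul_eq_zero (hgc : IsGradedComm R 𝒜) {y : R} {j : ℤ}
    (hy : y ∈ 𝒜 j) {ν : N} (hν : y • ν = 0) (r : R) : (y * r) • ν = 0 := by
  induction r using DirectSum.Decomposition.inductionOn 𝒜 with
  | zero => simp
  | homogeneous r =>
    rw [hgc _ _ _ _ hy r.2]
    split_ifs <;> simp [mul_smul, hν]
  | add r s hr hs => rw [mul_add, add_smul, hr, hs, add_zero]

def IsGradedComm.torsionBy (hgc : IsGradedComm R 𝒜) {y : R} {j : ℤ} (hy : y ∈ 𝒜 j) :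
    Submodule R N where
  carrier := {ν | y • ν = 0}
  add_mem' ha hb := by simp_all
  zero_mem' := smul_zero y
  smul_mem' r ν hν := by
    change y • r • ν = 0
    rw [← mul_smul, hgc.mul_smul_eq_zero hy hν]

theorem IsGradedComm.mem_torsionBy (hgc : IsGradedComm R 𝒜) {y : R} {j : ℤ} (hy : y ∈ 𝒜 j)
    {ν : N} : ν ∈ hgc.torsionBy hy ↔ y • ν = 0 :=
  Iff.rfl

theorem IsGradedComm.eventually_pow_smul_eq_zero_of_pow_succ [IsNoetherian R N]
    (hgc : IsGradedComm R 𝒜) {x : R} {i : ℤ} (hx : x ∈ 𝒜 i) :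
    ∀ᶠ n in Filter.atTop, ∀ ν : N, x ^ (n + 1) • ν = 0 → x ^ n • ν = 0 := by
  let torsion : ℕ →o Submodule R N :=
    { toFun n := hgc.torsionBy (SetLike.pow_mem_graded n hx)
      monotone' := monotone_nat_of_le_succ fun n ν hν => by
        simp only [hgc.mem_torsionBy] at hν ⊢
        rw [pow_succ', mul_smul, hν, smul_zero] }
  obtain ⟨n₀, hn₀⟩ := monotone_stabilizes_iff_noetherian.mpr ‹_› torsion
  filter_upwards [Filter.eventually_ge_atTop n₀] with n hn ν hν
  have hstable : torsion (n + 1) = torsion n := by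
    rw [← hn₀ n hn, hn₀ (n + 1) (by omega)]
  exact (SetLike.ext_iff.mp hstable ν).mp hν

end GradedTorsion

section GradedHom

variable {R : Type*} [Ring R] {𝒜 : ℤ → AddSubgroup R}
  {T : Type u} [Category.{v} T] [Preadditive T] [HasShift T ℤ]
  (hL : RLinearStructure R 𝒜 T)

/-- Written as a composite with the identity in degree `0` so that
`RLinearStructure.comp_smul_right` applies verbatim. -/
noncomputable def ghomOf {A B : T} {k : ℤ} (f : A ⟶ B⟦k⟧) : GHom A B :=
  DirectSum.of (fun n => A ⟶ B⟦n⟧) (k + 0) (hcomp f ((shiftFunctorZero T ℤ).inv.app B))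

theorem smul_ghomOf_eq_zero_iff {y : R} {j : ℤ} (hy : y ∈ 𝒜 j) {A B : T} {k : ℤ}
    (f : A ⟶ B⟦k⟧) :
    (letI := hL.mod A B; y • ghomOf f = 0) ↔ f ≫ (xMul hL y j B)⟦k⟧' = 0 := by
  let _ := hL.mod A B
  let _ := hL.mod B B
  rw [ghomOf, hL.comp_smul_right hy, map_eq_zero_iff _ (DirectSum.of_injective _), hcomp,
    ← Category.assoc, Preadditive.IsIso.comp_right_eq_zero, zero_add]
  rfl

noncomputable def ghomOfShift {A B : T} {m : ℤ} (h : A⟦m⟧ ⟶ B) : GHom A B :=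
  ghomOf ((shiftFunctorCompIsoId T m (-m) (add_neg_cancel m)).inv.app A ≫ h⟦-m⟧')

theorem smul_ghomOfShift_eq_zero_iff {y : R} {j : ℤ} (hy : y ∈ 𝒜 j) {A B : T} {m : ℤ}
    (h : A⟦m⟧ ⟶ B) :
    (letI := hL.mod A B; y • ghomOfShift h = 0) ↔ h ≫ xMul hL y j B = 0 := by
  rw [ghomOfShift, smul_ghomOf_eq_zero_iff hL hy, Category.assoc,
    Preadditive.IsIso.comp_left_eq_zero, ← Functor.map_comp, Functor.map_eq_zero_iff]

end GradedHom

/-- For `n ≫ 0` the map `ε(x^{n+1}) ≫ (x^n ⬝ id_M)` is `G`-ghost.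
Here `K` together with the distinguished triangle
`K → M → Σ^{(n+1)i} M → ΣK` realizes `Σ⁻¹(M//x^{n+1})` and its defining map `ε`. -/
theorem eventually_kos_map_ghost
    (R : Type*) [Ring R] (𝒜 : ℤ → AddSubgroup R) [GradedRing 𝒜]
    (hgc : IsGradedComm R 𝒜)
    (T : Type u) [Category.{v} T] [Preadditive T] [HasZeroObject T] [HasShift T ℤ]
    [∀ n : ℤ, (CategoryTheory.shiftFunctor T n).Additive] [Pretriangulated T]
    (hL : RLinearStructure R 𝒜 T)
    (G M : T)
    (hnoeth : letI := hL.mod G M; IsNoetherian R (GHom G M))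
    (x : R) (i : ℤ) (hx : x ∈ 𝒜 i) :
    ∃ n₀ : ℕ, ∀ n : ℕ, n₀ ≤ n →
      ∀ (K : T) (ε : K ⟶ M) (δ : M⟦((n : ℤ) + 1) * i⟧ ⟶ K⟦(1 : ℤ)⟧),
        Triangle.mk ε (xMul hL (x ^ (n + 1)) (((n : ℤ) + 1) * i) M) δ ∈ (distTriang T) →
          IsGhost G (ε ≫ xMul hL (x ^ n) ((n : ℤ) * i) M) := by
  let _ := hL.mod G M
  obtain ⟨n₀, hn₀⟩ := Filter.eventually_atTop.mp
    (hgc.eventually_pow_smul_eq_zero_of_pow_succ (N := GHom G M) hx)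
  have hpow (k : ℕ) : x ^ k ∈ 𝒜 ((k : ℤ) * i) := by
    simpa using SetLike.pow_mem_graded k hx
  refine ⟨n₀, fun n hn K ε δ htri m g => ?_⟩
  have hpow_succ : x ^ (n + 1) ∈ 𝒜 (((n : ℤ) + 1) * i) := by exact_mod_cast hpow (n + 1)
  have hkill : (g ≫ ε) ≫ xMul hL (x ^ (n + 1)) (((n : ℤ) + 1) * i) M = 0 := by
    rw [Category.assoc]
    exact (g ≫= comp_distTriang_mor_zero₁₂ _ htri).trans Limits.comp_zero
  rw [← Category.assoc, ← smul_ghomOfShift_eq_zero_iff hL (hpow n)]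
  exact hn₀ n hn _ ((smul_ghomOfShift_eq_zero_iff hL hpow_succ _).mpr hkill)
end

section
/- Let R be a graded-commutative ring, T an R-linear triangulated category, M ∈ T, and let x_1, …, x_t ∈ R be a regular sequence on the graded R-module 𝓜 = Hom*_T(M,M). Then there is an isomorphism of graded R-modules Hom*_T(Σ^{-t}(M//(x_1,…,x_t)), M) ≅ 𝓜/(x_1,…,x_t)𝓜 under which the canonical morphism Σ^{-t}(M//(x_1,…,x_t)) → M (the composite ε(x_1)∘⋯∘ε(x_t) of the defining maps of the iterated Koszul objects) corresponds to the class [id_M]. -/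
/-!
Statement 8: Let `R` be a graded-commutative ring, `T` an `R`-linear triangulated category,
`M ∈ T`, and let `x₁, …, x_t ∈ R` be a regular sequence on the graded `R`-module
`𝓜 = Hom*_T(M,M)`. Then there is an isomorphism of graded `R`-modules
`Hom*_T(Σ^{-t}(M//(x₁,…,x_t)), M) ≅ 𝓜/(x₁,…,x_t)𝓜` under which the canonical morphism
`Σ^{-t}(M//(x₁,…,x_t)) → M` (the composite of the defining maps `ε(xᵢ)` of the iterated
Koszul objects) corresponds to the class `[id_M]`. The iterated (desuspended) Koszul
objects are encoded as a chain `K t → ⋯ → K 0 = M` of distinguished triangles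
`K (s+1) → K s → Σ^{|x_s|} K s → Σ K (s+1)`.
-/

open CategoryTheory Limits Pretriangulated
open scoped DirectSum

universe v u

/-!
Apply `Hom*(-, M)` to the triangle `K (s+1) → K s → Σ^{d s} K s → Σ K (s+1)`. Precomposition with
`x ⬝ id` is multiplication by `x`, so by the long exact sequence, precomposition with `ε s` maps
`Hom*(K s, M)` onto `Hom*(K (s+1), M)` with kernel `x_s Hom*(K s, M)` as soon as `x_s` is a
non-zerodivisor on `Hom*(K s, M)`. By induction on `s`, precomposition with the composite
`K s → K 0 = M` is then a surjection `𝓜 → Hom*(K s, M)` with kernel `(x_0, …, x_{s-1})𝓜`, and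
regularity of the sequence makes `x_s` a non-zerodivisor on `Hom*(K s, M) ≅ 𝓜/(x_0, …, x_{s-1})𝓜`,
as the next step requires.
-/

section RegularSequence

variable {R : Type*} [Ring R] {N : Type*} [AddCommGroup N] [Module R N]

lemma smul_mem_smulSetSpan {x : R} {S : Set R} (hx : x ∈ S) (ν : N) :
    x • ν ∈ smulSetSpan N S :=
  Submodule.subset_span ⟨x, hx, ν, rfl⟩

lemma smulSetSpan_empty : smulSetSpan N (∅ : Set R) = ⊥ := by
  simp [smulSetSpan]

lemma smulSetSpan_union (S₁ S₂ : Set R) :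
    smulSetSpan N (S₁ ∪ S₂) = smulSetSpan N S₁ ⊔ smulSetSpan N S₂ := by
  simp only [smulSetSpan, ← Submodule.span_union]
  congr 1
  ext ν
  simp only [Set.mem_union, Set.mem_ofPred_eq, or_and_right, exists_or]

lemma smulSetSpan_image_lt_succ (x : ℕ → R) (t : ℕ) :
    smulSetSpan N (x '' {s | s < t + 1}) =
      smulSetSpan N (x '' {s | s < t}) ⊔ smulSetSpan N {x t} := by
  have : {s | s < t + 1} = {s | s < t} ∪ {t} := by
    ext s; simp only [Set.mem_ofPred_eq, Set.mem_union, Set.mem_singleton_iff]; omega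
  rw [this, Set.image_union, Set.image_singleton, smulSetSpan_union]

lemma map_smulSetSpan_of_surjective {N' : Type*} [AddCommGroup N'] [Module R N']
    (f : N →ₗ[R] N') (hf : Function.Surjective f) (S : Set R) :
    (smulSetSpan N S).map f = smulSetSpan N' S := by
  rw [smulSetSpan, Submodule.map_span]
  congr 1
  ext ν
  constructor
  · rintro ⟨_, ⟨x, hx, m, rfl⟩, rfl⟩
    exact ⟨x, hx, f m, map_smul f x m⟩
  · rintro ⟨x, hx, m', rfl⟩
    obtain ⟨m, rfl⟩ := hf m'
    exact ⟨x • m, ⟨x, hx, m, rfl⟩, map_smul f x m⟩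

lemma isRegSeqFrom_append (p : Submodule R N) (l₁ l₂ : List R) :
    IsRegSeqFrom N p (l₁ ++ l₂) ↔
      IsRegSeqFrom N p l₁ ∧ IsRegSeqFrom N (p ⊔ smulSetSpan N {a | a ∈ l₁}) l₂ := by
  induction l₁ generalizing p with
  | nil => simp [IsRegSeqFrom, smulSetSpan_empty]
  | cons a l ih =>
    have : {b | b ∈ a :: l} = {a} ∪ {b | b ∈ l} := by ext; simp
    rw [List.cons_append, IsRegSeqFrom, IsRegSeqFrom, ih, this, smulSetSpan_union, sup_assoc,
      and_assoc]

lemma IsRegSeqOn.smul_mem_imp_mem {x : ℕ → R} {t : ℕ}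
    (hreg : IsRegSeqOn N ((List.range t).map x)) {s : ℕ} (hs : s < t) (ν : N)
    (hν : x s • ν ∈ smulSetSpan N (x '' {s' | s' < s})) :
    ν ∈ smulSetSpan N (x '' {s' | s' < s}) := by
  induction t with
  | zero => omega
  | succ t ih =>
    rw [IsRegSeqOn, List.range_succ, List.map_append, isRegSeqFrom_append] at hreg
    obtain hs | rfl := Nat.lt_succ_iff_lt_or_eq.mp hs
    · exact ih hreg.1 hs
    · have himage : {a | a ∈ (List.range s).map x} = x '' {s' | s' < s} := by ext; simp
      rw [himage, bot_sup_eq] at hreg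
      exact hreg.2.1 ν hν

lemma isSMulRegular_of_surjective {Q V : Type*} [AddCommGroup Q] [Module R Q] [AddCommGroup V]
    [Module R V] (π : Q →ₗ[R] V) (hπ : Function.Surjective π) {x : R}
    (hx : ∀ ν, x • ν ∈ LinearMap.ker π → ν ∈ LinearMap.ker π) : IsSMulRegular V x := by
  intro v w hvw
  obtain ⟨μ, rfl⟩ := hπ v
  obtain ⟨ν, rfl⟩ := hπ w
  have hsub : x • (μ - ν) ∈ LinearMap.ker π := by simpa [smul_sub, sub_eq_zero] using hvw
  simpa [sub_eq_zero] using hx _ hsub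

lemma ker_comp_eq_sup_smulSetSpan {Q V W : Type*} [AddCommGroup Q] [Module R Q]
    [AddCommGroup V] [Module R V] [AddCommGroup W] [Module R W]
    (π : Q →ₗ[R] V) (hπ : Function.Surjective π) (Φ : V →ₗ[R] W) {x : R}
    (hΦ : LinearMap.ker Φ = smulSetSpan V {x}) :
    LinearMap.ker (Φ ∘ₗ π) = LinearMap.ker π ⊔ smulSetSpan Q {x} := by
  rw [LinearMap.ker_comp, hΦ, ← map_smulSetSpan_of_surjective π hπ, Submodule.comap_map_eq,
    sup_comm]

lemma exists_linearEquiv_quotient_of_surjective {Q V : Type*} [AddCommGroup Q] [Module R Q]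
    [AddCommGroup V] [Module R V] (π : Q →ₗ[R] V) (hπ : Function.Surjective π)
    {I : Submodule R Q} (hI : LinearMap.ker π = I) :
    ∃ e : V ≃ₗ[R] Q ⧸ I, ∀ q, e (π q) = Submodule.Quotient.mk q :=
  ⟨(π.quotKerEquivOfSurjective hπ).symm ≪≫ₗ Submodule.quotEquivOfEq _ _ hI, fun q => by
    simp⟩

end RegularSequence

section Shift

variable {T : Type u} [Category.{v} T] [HasShift T ℤ]

lemma shiftFunctorAdd'_add_zero_inv_app' (m c : ℤ) (h : m + 0 = c) (P : T) :
    (shiftFunctorAdd' T m 0 c h).inv.app P =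
      (shiftFunctorZero T ℤ).hom.app (P⟦m⟧) ≫ eqToHom (by rw [← h, add_zero]; rfl) := by
  obtain rfl : c = m := by omega
  simp [shiftFunctorAdd'_add_zero_inv_app]

lemma hcomp_shiftFunctorZero_inv {A B P : T} {m : ℤ} (e : A ⟶ B) (g : B ⟶ P⟦m⟧) :
    hcomp (e ≫ (shiftFunctorZero T ℤ).inv.app B) g = (e ≫ g) ≫ eqToHom (by rw [zero_add]) := by
  simp only [hcomp, Category.assoc, shiftFunctorAdd'_add_zero_inv_app',
    ← (shiftFunctorZero T ℤ).inv.naturality_assoc g, Iso.inv_hom_id_app_assoc]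
  rfl

end Shift

section GradedModule

variable {R : Type*} [Ring R] (𝒜 : ℤ → AddSubgroup R) [GradedRing 𝒜]

lemma AddMonoidHom.map_smul_of_map_smul_homogeneous {V W : Type*} [AddCommGroup V]
    [AddCommGroup W] [Module R V] [Module R W] (f : V →+ W)
    (hf : ∀ ⦃i : ℤ⦄ ⦃x : R⦄, x ∈ 𝒜 i → ∀ v, f (x • v) = x • f v) (r : R) (v : V) :
    f (r • v) = r • f v := by
  induction r using DirectSum.Decomposition.inductionOn 𝒜 with
  | zero => simp
  | homogeneous x => exact hf x.2 v
  | add a b ha hb => rw [add_smul, add_smul, map_add, ha, hb]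

end GradedModule

section GradedAction

variable {R : Type*} [Ring R] {𝒜 : ℤ → AddSubgroup R}
variable {T : Type u} [Category.{v} T] [Preadditive T] [HasShift T ℤ]
variable (hL : RLinearStructure R 𝒜 T)

lemma of_comp_eqToHom {A B : T} {n n' : ℤ} (h : n = n') (f : A ⟶ B⟦n⟧) :
    DirectSum.of (fun k => A ⟶ B⟦k⟧) n' (f ≫ eqToHom (by rw [h])) =
      DirectSum.of (fun k => A ⟶ B⟦k⟧) n f := by
  subst h; simp

lemma RLinearStructure.smul_of_eq_of_apply {i : ℤ} {x : R} (hx : x ∈ 𝒜 i) {A B : T} {n : ℤ}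
    (f : A ⟶ B⟦n⟧) :
    letI := hL.mod A B
    x • DirectSum.of (fun k => A ⟶ B⟦k⟧) n f =
      DirectSum.of (fun k => A ⟶ B⟦k⟧) (n + i)
        ((x • DirectSum.of (fun k => A ⟶ B⟦k⟧) n f) (n + i)) := by
  let := hL.mod A B
  ext m
  by_cases h : m = n + i
  · subst h; rw [DirectSum.of_eq_same]
  · rw [hL.degree hx f m h, DirectSum.of_eq_of_ne _ _ _ h]

lemma RLinearStructure.smul_of_eq_of_hcomp_xMul {i : ℤ} {x : R} (hx : x ∈ 𝒜 i) {A B : T}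
    {m : ℤ} (h : A ⟶ B⟦m⟧) :
    letI := hL.mod A B
    x • DirectSum.of (fun k => A ⟶ B⟦k⟧) m h =
      DirectSum.of (fun k => A ⟶ B⟦k⟧) (i + m) (hcomp (xMul hL x i A) h) := by
  have key := hL.comp_smul_left hx ((shiftFunctorZero T ℤ).inv.app A) h
  have hunit := hcomp_shiftFunctorZero_inv (𝟙 A) h
  rw [Category.id_comp, Category.id_comp] at hunit
  rw [hunit, of_comp_eqToHom (zero_add m).symm] at key
  rwa [zero_add i] at key

lemma RLinearStructure.smul_of_comp {i : ℤ} {x : R} (hx : x ∈ 𝒜 i) {A A' B : T} {m : ℤ}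
    (e : A' ⟶ A) (g : A ⟶ B⟦m⟧) :
    letI := hL.mod A' B; letI := hL.mod A B
    x • DirectSum.of (fun k => A' ⟶ B⟦k⟧) m (e ≫ g) =
      DirectSum.of (fun k => A' ⟶ B⟦k⟧) (m + i)
        (e ≫ (x • DirectSum.of (fun k => A ⟶ B⟦k⟧) m g) (m + i)) := by
  have key := hL.comp_smul_right hx (e ≫ (shiftFunctorZero T ℤ).inv.app A) g
  rwa [hcomp_shiftFunctorZero_inv, hcomp_shiftFunctorZero_inv, of_comp_eqToHom (zero_add m).symm,
    of_comp_eqToHom (zero_add (m + i)).symm] at key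

lemma RLinearStructure.exists_smul_of_eq_of_xMul_comp {i : ℤ} {x : R} (hx : x ∈ 𝒜 i) {B M : T}
    {n : ℤ} (q : B⟦i⟧ ⟶ M⟦n⟧) :
    letI := hL.mod B M
    ∃ (m : ℤ) (h : B ⟶ M⟦m⟧), x • DirectSum.of (fun k => B ⟶ M⟦k⟧) m h =
        DirectSum.of (fun k => B ⟶ M⟦k⟧) n (xMul hL x i B ≫ q) ∧ (h = 0 → q = 0) := by
  obtain ⟨m, rfl⟩ : ∃ m, n = i + m := ⟨n - i, by ring⟩
  let h := (shiftFunctor T i).preimage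
    (q ≫ (shiftFunctorAdd' T m i (i + m) (add_comm m i)).hom.app M)
  have hq : q = h⟦i⟧' ≫ (shiftFunctorAdd' T m i (i + m) (add_comm m i)).inv.app M := by simp [h]
  refine ⟨m, h, ?_, fun h0 => by rw [hq, h0, Functor.map_zero, zero_comp]⟩
  rw [hL.smul_of_eq_of_hcomp_xMul hx, hq]
  rfl

lemma RLinearStructure.eq_zero_of_xMul_comp_eq_zero {i : ℤ} {x : R} (hx : x ∈ 𝒜 i) {B M : T}
    (hreg : letI := hL.mod B M; IsSMulRegular (GHom B M) x) {n : ℤ} (q : B⟦i⟧ ⟶ M⟦n⟧)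
    (hq : xMul hL x i B ≫ q = 0) : q = 0 := by
  let := hL.mod B M
  obtain ⟨m, h, hxh, hq0⟩ := hL.exists_smul_of_eq_of_xMul_comp hx q
  refine hq0 (DirectSum.of_injective (β := fun k => B ⟶ M⟦k⟧) m (hreg ?_))
  simp only [hxh, hq, map_zero, smul_zero]

end GradedAction

section Precomposition

variable {R : Type*} [Ring R] {𝒜 : ℤ → AddSubgroup R}
variable {T : Type u} [Category.{v} T] [Preadditive T] [HasShift T ℤ]

noncomputable def GHom.precomp {X Y : T} (e : X ⟶ Y) (M : T) : GHom Y M →+ GHom X M :=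
  DirectSum.map fun n => Preadditive.leftComp (M⟦n⟧) e

@[simp]
lemma GHom.precomp_of {X Y M : T} (e : X ⟶ Y) (n : ℤ) (g : Y ⟶ M⟦n⟧) :
    GHom.precomp e M (DirectSum.of (fun k => Y ⟶ M⟦k⟧) n g) =
      DirectSum.of (fun k => X ⟶ M⟦k⟧) n (e ≫ g) :=
  DirectSum.map_of _ _ _

@[simp]
lemma GHom.precomp_apply {X Y M : T} (e : X ⟶ Y) (v : GHom Y M) (n : ℤ) :
    GHom.precomp e M v n = e ≫ v n :=
  DirectSum.map_apply _ _ _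

lemma GHom.exists_comp_eq_of_precomp_surjective {X Y M : T} {e : X ⟶ Y}
    (he : Function.Surjective (GHom.precomp e M)) {n : ℤ} (f : X ⟶ M⟦n⟧) :
    ∃ g : Y ⟶ M⟦n⟧, e ≫ g = f := by
  obtain ⟨v, hv⟩ := he (DirectSum.of _ n f)
  exact ⟨v n, by rw [← GHom.precomp_apply, hv, DirectSum.of_eq_same]⟩

variable (hL : RLinearStructure R 𝒜 T)

lemma GHom.precomp_smul_of_homogeneous {X Y M : T} (e : X ⟶ Y) {i : ℤ} {x : R} (hx : x ∈ 𝒜 i)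
    (v : GHom Y M) :
    letI := hL.mod Y M; letI := hL.mod X M
    GHom.precomp e M (x • v) = x • GHom.precomp e M v := by
  let := hL.mod Y M; let := hL.mod X M
  induction v using DirectSum.induction_on with
  | zero => simp
  | of m g =>
    rw [hL.smul_of_eq_of_apply hx, GHom.precomp_of, GHom.precomp_of, hL.smul_of_comp hx]
  | add v w hv hw => rw [smul_add, map_add, map_add, hv, hw, smul_add]

variable [GradedRing 𝒜]

noncomputable def GHom.precompₗ {X Y : T} (e : X ⟶ Y) (M : T) :
    letI := hL.mod Y M; letI := hL.mod X M
    GHom Y M →ₗ[R] GHom X M :=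
  letI := hL.mod Y M; letI := hL.mod X M
  { GHom.precomp e M with
    map_smul' := (GHom.precomp e M).map_smul_of_map_smul_homogeneous 𝒜
      fun _ _ hx v => GHom.precomp_smul_of_homogeneous hL e hx v }

@[simp]
lemma GHom.precompₗ_apply {X Y M : T} (e : X ⟶ Y) (v : GHom Y M) :
    GHom.precompₗ hL e M v = GHom.precomp e M v := rfl

lemma GHom.precompₗ_comp {X Y Z M : T} (a : X ⟶ Y) (b : Y ⟶ Z) :
    GHom.precompₗ hL (a ≫ b) M = GHom.precompₗ hL a M ∘ₗ GHom.precompₗ hL b M := by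
  let := hL.mod Z M; let := hL.mod Y M; let := hL.mod X M
  refine LinearMap.ext fun v => DFinsupp.ext fun n => ?_
  simp

end Precomposition

section Triangle

variable {R : Type*} [Ring R] {𝒜 : ℤ → AddSubgroup R}
variable {T : Type u} [Category.{v} T] [Preadditive T] [HasZeroObject T]
  [HasShift T ℤ] [∀ n : ℤ, (CategoryTheory.shiftFunctor T n).Additive] [Pretriangulated T]
variable (hL : RLinearStructure R 𝒜 T) {i : ℤ} {x : R} {A B M : T} {ε : A ⟶ B}
  {δ : B⟦i⟧ ⟶ A⟦(1 : ℤ)⟧}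

lemma RLinearStructure.of_mem_smulSetSpan_of_comp_eq_zero (hx : x ∈ 𝒜 i)
    (hΔ : Triangle.mk ε (xMul hL x i B) δ ∈ distTriang T) {m : ℤ} (g : B ⟶ M⟦m⟧)
    (hg : ε ≫ g = 0) :
    letI := hL.mod B M
    DirectSum.of (fun k => B ⟶ M⟦k⟧) m g ∈ smulSetSpan (GHom B M) {x} := by
  let := hL.mod B M
  obtain ⟨q, hq⟩ := Triangle.yoneda_exact₂ _ hΔ g hg
  obtain ⟨m', h, hxh, -⟩ := hL.exists_smul_of_eq_of_xMul_comp hx q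
  rw [show g = xMul hL x i B ≫ q from hq, ← hxh]
  exact smul_mem_smulSetSpan (Set.mem_singleton x) _

lemma RLinearStructure.exists_comp_eq_of_distTriang (hx : x ∈ 𝒜 i)
    (hΔ : Triangle.mk ε (xMul hL x i B) δ ∈ distTriang T)
    (hreg : letI := hL.mod B M; IsSMulRegular (GHom B M) x) {m : ℤ} (f : A ⟶ M⟦m⟧) :
    ∃ g : B ⟶ M⟦m⟧, ε ≫ g = f := by
  -- `f` extends along `ε` once `δ ≫ f⟦1⟧'` vanishes; it does, as `xMul ≫ δ = 0` and `x` is regular.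
  have hδ : δ ≫ f⟦(1 : ℤ)⟧' = 0 := by
    rw [← cancel_mono ((shiftFunctorAdd' T m 1 (m + 1) rfl).inv.app M), zero_comp,
      Category.assoc]
    refine hL.eq_zero_of_xMul_comp_eq_zero hx hreg _ ?_
    have h0 : xMul hL x i B ≫ δ = 0 := comp_distTriang_mor_zero₂₃ _ hΔ
    rw [← Category.assoc, h0, zero_comp]
  obtain ⟨q, hq⟩ : ∃ q : B⟦(1 : ℤ)⟧ ⟶ (M⟦m⟧)⟦(1 : ℤ)⟧, f⟦(1 : ℤ)⟧' = (-ε⟦(1 : ℤ)⟧') ≫ q :=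
    Triangle.yoneda_exact₂ _ (rot_of_distTriang _ (rot_of_distTriang _ hΔ)) (f⟦(1 : ℤ)⟧') hδ
  obtain ⟨g, hg⟩ : ∃ g : B ⟶ M⟦m⟧, g⟦(1 : ℤ)⟧' = -q := (shiftFunctor T (1 : ℤ)).map_surjective _
  refine ⟨g, (shiftFunctor T (1 : ℤ)).map_injective ?_⟩
  rw [hq, Functor.map_comp, hg]
  simp

lemma RLinearStructure.precomp_surjective_of_distTriang (hx : x ∈ 𝒜 i)
    (hΔ : Triangle.mk ε (xMul hL x i B) δ ∈ distTriang T)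
    (hreg : letI := hL.mod B M; IsSMulRegular (GHom B M) x) :
    Function.Surjective (GHom.precomp ε M) := by
  intro w
  induction w using DirectSum.induction_on with
  | zero => exact ⟨0, map_zero _⟩
  | of m f =>
    obtain ⟨g, rfl⟩ := hL.exists_comp_eq_of_distTriang hx hΔ hreg f
    exact ⟨_, GHom.precomp_of ε m g⟩
  | add a b ha hb =>
    obtain ⟨v, rfl⟩ := ha
    obtain ⟨w, rfl⟩ := hb
    exact ⟨v + w, map_add _ _ _⟩

lemma RLinearStructure.ker_precompₗ_of_distTriang [GradedRing 𝒜] (hx : x ∈ 𝒜 i)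
    (hΔ : Triangle.mk ε (xMul hL x i B) δ ∈ distTriang T) :
    letI := hL.mod B M; letI := hL.mod A M
    LinearMap.ker (GHom.precompₗ hL ε M) = smulSetSpan (GHom B M) {x} := by
  let := hL.mod B M; let := hL.mod A M
  apply le_antisymm
  · intro v hv
    classical
    rw [← DirectSum.sum_support_of v]
    refine Submodule.sum_mem _ fun m _ => hL.of_mem_smulSetSpan_of_comp_eq_zero hx hΔ _ ?_
    rw [← GHom.precomp_apply, ← GHom.precompₗ_apply hL, hv]
    rfl
  · rw [smulSetSpan, Submodule.span_le]
    rintro _ ⟨_, rfl, w, rfl⟩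
    induction w using DirectSum.induction_on with
    | zero => simp
    | of m h =>
      have h0 : ε ≫ xMul hL _ i B = 0 := comp_distTriang_mor_zero₁₂ _ hΔ
      simp [hL.smul_of_eq_of_hcomp_xMul hx, hcomp, reassoc_of% h0]
    | add v w hv hw =>
      rw [smul_add]
      exact add_mem hv hw

end Triangle

section KoszulChain

variable {R : Type*} [Ring R] {𝒜 : ℤ → AddSubgroup R} [GradedRing 𝒜]
variable {T : Type u} [Category.{v} T] [Preadditive T] [HasZeroObject T]
  [HasShift T ℤ] [∀ n : ℤ, (CategoryTheory.shiftFunctor T n).Additive] [Pretriangulated T]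

lemma RLinearStructure.precompₗ_chainComp_surjective_and_ker (hL : RLinearStructure R 𝒜 T)
    (K : ℕ → T) (ε : ∀ s : ℕ, K (s + 1) ⟶ K s) (x : ℕ → R) (d : ℕ → ℤ)
    (δ : ∀ s : ℕ, (K s)⟦d s⟧ ⟶ (K (s + 1))⟦(1 : ℤ)⟧) (t : ℕ) (hx : ∀ s < t, x s ∈ 𝒜 (d s))
    (hreg : letI := hL.mod (K 0) (K 0); ∀ s < t, ∀ ν : GHom (K 0) (K 0),
      x s • ν ∈ smulSetSpan (GHom (K 0) (K 0)) (x '' {s' | s' < s}) →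
        ν ∈ smulSetSpan (GHom (K 0) (K 0)) (x '' {s' | s' < s}))
    (htri : ∀ s < t,
      Triangle.mk (ε s) (xMul hL (x s) (d s) (K s)) (δ s) ∈ (distTriang T)) :
    letI := hL.mod (K 0) (K 0); letI := hL.mod (K t) (K 0)
    Function.Surjective (GHom.precompₗ hL (chainComp K ε t) (K 0)) ∧
      LinearMap.ker (GHom.precompₗ hL (chainComp K ε t) (K 0)) =
        smulSetSpan (GHom (K 0) (K 0)) (x '' {s | s < t}) := by
  let := hL.mod (K 0) (K 0)
  induction t with
  | zero =>
    have hid : ∀ v, GHom.precompₗ hL (chainComp K ε 0) (K 0) v = v := fun v =>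
      DFinsupp.ext fun n => by simp [chainComp]
    refine ⟨fun v => ⟨v, hid v⟩, ?_⟩
    simp [LinearMap.ker_eq_bot', hid, smulSetSpan_empty]
  | succ t ih =>
    let := hL.mod (K t) (K 0); let := hL.mod (K (t + 1)) (K 0)
    obtain ⟨hsurj, hker⟩ := ih (fun s hs => hx s (by omega)) (fun s hs => hreg s (by omega))
      (fun s hs => htri s (by omega))
    have hregt : IsSMulRegular (GHom (K t) (K 0)) (x t) :=
      isSMulRegular_of_surjective _ hsurj (by rw [hker]; exact hreg t (by omega))
    rw [chainComp, GHom.precompₗ_comp]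
    refine ⟨(hL.precomp_surjective_of_distTriang (hx t (by omega)) (htri t (by omega)) hregt).comp
      hsurj, ?_⟩
    rw [ker_comp_eq_sup_smulSetSpan _ hsurj _
      (hL.ker_precompₗ_of_distTriang (hx t (by omega)) (htri t (by omega))), hker,
      smulSetSpan_image_lt_succ]

end KoszulChain

/-- `Hom*_T(Σ^{-t}(M//(x₁,…,x_t)), M) ≅ 𝓜/(x₁,…,x_t)𝓜` as graded
`R`-modules, identifying the canonical morphism with `[id_M]`. -/
theorem hom_kos_iso_quotient
    (R : Type*) [Ring R] (𝒜 : ℤ → AddSubgroup R) [GradedRing 𝒜]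
    (hgc : IsGradedComm R 𝒜)
    (T : Type u) [Category.{v} T] [Preadditive T] [HasZeroObject T] [HasShift T ℤ]
    [∀ n : ℤ, (CategoryTheory.shiftFunctor T n).Additive] [Pretriangulated T]
    (hL : RLinearStructure R 𝒜 T)
    (M : T) (t : ℕ) (x : ℕ → R) (d : ℕ → ℤ) (hx : ∀ s < t, x s ∈ 𝒜 (d s))
    (hreg : letI := hL.mod M M; IsRegSeqOn (GHom M M) ((List.range t).map x))
    (K : ℕ → T) (hK0 : K 0 = M)
    (ε : ∀ s : ℕ, K (s + 1) ⟶ K s)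
    (δ : ∀ s : ℕ, (K s)⟦d s⟧ ⟶ (K (s + 1))⟦(1 : ℤ)⟧)
    (htri : ∀ s < t,
      Triangle.mk (ε s) (xMul hL (x s) (d s) (K s)) (δ s) ∈ (distTriang T)) :
    letI := hL.mod (K t) M
    letI := hL.mod M M
    ∃ e : GHom (K t) M ≃ₗ[R]
        (GHom M M ⧸ smulSetSpan (GHom M M) (x '' {s : ℕ | s < t})),
      (∀ (m : ℤ) (f : K t ⟶ M⟦m⟧), ∃ g : M ⟶ M⟦m⟧,
          e (DirectSum.of (fun k => K t ⟶ M⟦k⟧) m f) =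
            Submodule.Quotient.mk (DirectSum.of (fun k => M ⟶ M⟦k⟧) m g)) ∧
      (∀ (m : ℤ) (g : M ⟶ M⟦m⟧), ∃ f : K t ⟶ M⟦m⟧,
          e (DirectSum.of (fun k => K t ⟶ M⟦k⟧) m f) =
            Submodule.Quotient.mk (DirectSum.of (fun k => M ⟶ M⟦k⟧) m g)) ∧
      e (DirectSum.of (fun k => K t ⟶ M⟦k⟧) 0
          (chainComp K ε t ≫ eqToHom hK0 ≫ (shiftFunctorZero T ℤ).inv.app M)) =
        Submodule.Quotient.mk (idG M) := by
  subst hK0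
  let := hL.mod (K 0) (K 0); let := hL.mod (K t) (K 0)
  obtain ⟨hsurj, hker⟩ := hL.precompₗ_chainComp_surjective_and_ker K ε x d δ t hx
    (fun s hs => hreg.smul_mem_imp_mem hs) htri
  obtain ⟨e, he⟩ := exists_linearEquiv_quotient_of_surjective _ hsurj hker
  refine ⟨e, fun m f => ?_, fun m g => ⟨chainComp K ε t ≫ g, ?_⟩, ?_⟩
  · obtain ⟨g, rfl⟩ := GHom.exists_comp_eq_of_precomp_surjective hsurj f
    exact ⟨g, by simpa using he (DirectSum.of _ m g)⟩
  · simpa using he (DirectSum.of _ m g)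
  · simpa [idG] using he (idG (K 0))
end

section
/- Let R be a commutative ring, N an R-module, and x_1, …, x_t ∈ R an N-regular sequence. Let ν ∈ N with ν ∉ (x_1,…,x_t)N. Then for all integers n_1, …, n_t ≥ 0 one has x_1^{n_1}⋯x_t^{n_t}·ν ∉ (x_1^{n_1+1}, …, x_t^{n_t+1})N; that is, the class [x_1^{n_1}⋯x_t^{n_t}·ν] is non-zero in N/(x_1^{n_1+1}, …, x_t^{n_t+1})N. -/
/-!
Induct on `t`, working modulo an arbitrary submodule `S` of `N`. Everything rests on a swap:
if `r` is regular on `N/S` and `y` on `N/(S + rN)`, then `r` is regular on `N/(S + yN)`, and `y`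
is regular on every `N/(S + rᵏN)`. Hence for a regular sequence `r, x₂, …, x_t` on `N/S`, the
tail stays regular on `N/(S + rᵏN)`, and `r` is regular modulo `S + (x₂, …, x_t)N`. The latter
turns `ν ∉ S + (r, x₂, …, x_t)N` into `r^n₁ ν ∉ S + r^(n₁+1) N + (x₂, …, x_t)N`, and the
induction hypothesis, applied modulo `S + r^(n₁+1) N`, finishes.
-/

section

open scoped Pointwise

namespace Submodule

variable {R : Type*} [CommRing R] {N : Type*} [AddCommGroup N] [Module R N]
  {S : Submodule R N} {r y : R}

lemma mem_sup_smul_top_iff {n : N} : n ∈ S ⊔ r • ⊤ ↔ ∃ s ∈ S, ∃ m, s + r • m = n := by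
  simp [mem_sup, mem_smul_pointwise_iff_exists]

lemma smul_mem_sup_smul_top (m : N) : r • m ∈ S ⊔ r • ⊤ :=
  mem_sup_right (smul_mem_pointwise_smul m r ⊤ trivial)

lemma span_insert_smul_top (a : R) (s : Set R) :
    Ideal.span (insert a s) • (⊤ : Submodule R N) = a • ⊤ ⊔ Ideal.span s • ⊤ := by
  rw [Ideal.span_insert, sup_smul, ideal_span_singleton_smul]

lemma smul_mem_sup_pow_succ_smul_top {n : N} (k : ℕ) (hn : n ∈ S ⊔ (r ^ k) • ⊤) :
    r • n ∈ S ⊔ (r ^ (k + 1)) • ⊤ := by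
  obtain ⟨s, hs, m, rfl⟩ := mem_sup_smul_top_iff.mp hn
  rw [smul_add, smul_smul, ← pow_succ']
  exact add_mem (mem_sup_left (S.smul_mem r hs)) (smul_mem_sup_smul_top m)

/-- The two-element case of: a member of a regular sequence is regular modulo all the others. -/
lemma isSMulRegular_quotient_sup_smul_top_swap (hr : IsSMulRegular (N ⧸ S) r)
    (hy : IsSMulRegular (N ⧸ (S ⊔ r • ⊤)) y) : IsSMulRegular (N ⧸ (S ⊔ y • ⊤)) r := by
  refine (isSMulRegular_quotient_iff_mem_of_smul_mem _ _).mpr fun n hn ↦ ?_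
  obtain ⟨s, hs, m, hsm⟩ := mem_sup_smul_top_iff.mp hn
  have hym : y • m ∈ S ⊔ r • ⊤ := by
    rw [show y • m = r • n - s by rw [← hsm]; abel]
    exact sub_mem (smul_mem_sup_smul_top n) (mem_sup_left hs)
  obtain ⟨s', hs', p, rfl⟩ :=
    mem_sup_smul_top_iff.mp (mem_of_isSMulRegular_quotient_of_smul_mem hy hym)
  have hnp : n - y • p ∈ S := by
    refine mem_of_isSMulRegular_quotient_of_smul_mem hr ?_
    rw [show r • (n - y • p) = s + y • s' by
      rw [smul_sub, ← hsm, smul_add, smul_comm r y]; abel]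
    exact add_mem hs (S.smul_mem y hs')
  rw [← sub_add_cancel n (y • p)]
  exact add_mem (mem_sup_left hnp) (smul_mem_sup_smul_top p)

lemma isSMulRegular_quotient_sup_pow_smul_top (hr : IsSMulRegular (N ⧸ S) r)
    (hy : IsSMulRegular (N ⧸ (S ⊔ r • ⊤)) y) (k : ℕ) :
    IsSMulRegular (N ⧸ (S ⊔ (r ^ k) • ⊤)) y := by
  induction k with
  | zero => simp [isSMulRegular_quotient_iff_mem_of_smul_mem]
  | succ k ih =>
    refine (isSMulRegular_quotient_iff_mem_of_smul_mem _ _).mpr fun n hn ↦ ?_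
    have hn₁ : y • n ∈ S ⊔ r • ⊤ := by
      obtain ⟨s, hs, m, hm⟩ := mem_sup_smul_top_iff.mp hn
      rw [← hm, pow_succ', mul_smul]
      exact add_mem (mem_sup_left hs) (smul_mem_sup_smul_top _)
    obtain ⟨s, hs, p, rfl⟩ :=
      mem_sup_smul_top_iff.mp (mem_of_isSMulRegular_quotient_of_smul_mem hy hn₁)
    obtain ⟨s', hs', m, hm⟩ := mem_sup_smul_top_iff.mp hn
    have hyp : y • p - r ^ k • m ∈ S := by
      refine mem_of_isSMulRegular_quotient_of_smul_mem hr ?_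
      rw [show r • (y • p - r ^ k • m) = s' - y • s by
        rw [smul_sub, smul_comm r y, ← mul_smul r (r ^ k), ← pow_succ',
          sub_eq_sub_iff_add_eq_add, hm, smul_add, add_comm]]
      exact sub_mem hs' (S.smul_mem y hs)
    have hp : p ∈ S ⊔ (r ^ k) • ⊤ := by
      refine mem_of_isSMulRegular_quotient_of_smul_mem ih ?_
      rw [← sub_add_cancel (y • p) (r ^ k • m)]
      exact add_mem (mem_sup_left hyp) (smul_mem_sup_smul_top m)
    exact add_mem (mem_sup_left hs) (smul_mem_sup_pow_succ_smul_top k hp)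

lemma pow_smul_notMem_sup_pow_succ_smul_top (hr : IsSMulRegular (N ⧸ S) r) {ν : N}
    (hν : ν ∉ S ⊔ r • ⊤) (a : ℕ) : r ^ a • ν ∉ S ⊔ (r ^ (a + 1)) • ⊤ := by
  intro h
  obtain ⟨τ, hτ, m, hm⟩ := mem_sup_smul_top_iff.mp h
  have hνm : ν - r • m ∈ S := by
    refine mem_of_isSMulRegular_quotient_of_smul_mem (hr.pow a) ?_
    rwa [smul_sub, smul_smul, ← pow_succ, ← hm, add_sub_cancel_right]
  exact hν (sub_add_cancel ν (r • m) ▸ add_mem (mem_sup_left hνm) (smul_mem_sup_smul_top m))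

end Submodule

open Submodule

variable {R : Type*} [CommRing R] {N : Type*} [AddCommGroup N] [Module R N]

def IsWeaklyRegularMod (S : Submodule R N) {t : ℕ} (x : Fin t → R) : Prop :=
  ∀ i, IsSMulRegular (N ⧸ (S ⊔ Ideal.span (x '' {j | j < i}) • ⊤)) (x i)

lemma Fin.image_setOf_lt_succ {α : Type*} {t : ℕ} (x : Fin (t + 1) → α) (i : Fin t) :
    x '' {j | j < i.succ} = insert (x 0) (Fin.tail x '' {j | j < i}) := by
  ext a
  simp only [Set.mem_image, Set.mem_ofPred_eq, Set.mem_insert_iff, Fin.exists_fin_succ,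
    Fin.succ_pos, Fin.succ_lt_succ_iff, Fin.tail, true_and]
  exact or_congr eq_comm Iff.rfl

lemma isWeaklyRegularMod_succ_iff {S : Submodule R N} {t : ℕ} {x : Fin (t + 1) → R} :
    IsWeaklyRegularMod S x ↔
      IsSMulRegular (N ⧸ S) (x 0) ∧ IsWeaklyRegularMod (S ⊔ x 0 • ⊤) (Fin.tail x) := by
  refine Fin.forall_fin_succ.trans (and_congr ?_ (forall_congr' fun i ↦ ?_))
  · rw [show x '' {j | j < 0} = ∅ by simp, Ideal.span_empty, bot_smul, sup_bot_eq]
  · rw [Fin.image_setOf_lt_succ, span_insert_smul_top, ← sup_assoc]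
    rfl

namespace IsWeaklyRegularMod

variable {S : Submodule R N}

lemma sup_pow_smul_top {r : R} (hr : IsSMulRegular (N ⧸ S) r) {t : ℕ} {x : Fin t → R}
    (hx : IsWeaklyRegularMod (S ⊔ r • ⊤) x) (k : ℕ) : IsWeaklyRegularMod (S ⊔ (r ^ k) • ⊤) x := by
  induction t generalizing S with
  | zero => exact fun i ↦ i.elim0
  | succ t ih =>
    obtain ⟨hx₀, hx'⟩ := isWeaklyRegularMod_succ_iff.mp hx
    refine isWeaklyRegularMod_succ_iff.mpr
      ⟨isSMulRegular_quotient_sup_pow_smul_top hr hx₀ k, ?_⟩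
    rw [sup_right_comm] at hx' ⊢
    exact ih (isSMulRegular_quotient_sup_smul_top_swap hr hx₀) hx'

lemma isSMulRegular_quotient_head {t : ℕ} {x : Fin (t + 1) → R} (hx : IsWeaklyRegularMod S x) :
    IsSMulRegular (N ⧸ (S ⊔ Ideal.span (Set.range (Fin.tail x)) • ⊤)) (x 0) := by
  induction t generalizing S with
  | zero =>
    rw [Set.range_eq_empty, Ideal.span_empty, bot_smul, sup_bot_eq]
    exact (isWeaklyRegularMod_succ_iff.mp hx).1
  | succ t ih =>
    obtain ⟨hx₀, hx'⟩ := isWeaklyRegularMod_succ_iff.mp hx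
    obtain ⟨hx₁, hx''⟩ := isWeaklyRegularMod_succ_iff.mp hx'
    have hy : IsWeaklyRegularMod (S ⊔ x 1 • ⊤) (Fin.cons (x 0) (Fin.tail (Fin.tail x))) := by
      refine isWeaklyRegularMod_succ_iff.mpr ⟨?_, ?_⟩
      · exact isSMulRegular_quotient_sup_smul_top_swap hx₀ hx₁
      · rw [Fin.cons_zero, Fin.tail_cons, sup_right_comm]
        exact hx''
    rw [Fin.range_fin_succ (Fin.tail x), span_insert_smul_top, ← sup_assoc]
    exact ih hy

theorem prod_pow_smul_notMem {t : ℕ} {x : Fin t → R} (hx : IsWeaklyRegularMod S x) {ν : N}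
    (hν : ν ∉ S ⊔ Ideal.span (Set.range x) • ⊤) (n : Fin t → ℕ) :
    (∏ i, x i ^ n i) • ν ∉ S ⊔ Ideal.span (Set.range fun i ↦ x i ^ (n i + 1)) • ⊤ := by
  induction t generalizing S ν with
  | zero => simpa using hν
  | succ t ih =>
    obtain ⟨hx₀, hx'⟩ := isWeaklyRegularMod_succ_iff.mp hx
    rw [Fin.range_fin_succ, span_insert_smul_top, ← sup_assoc, sup_right_comm] at hν
    have hν₀ : x 0 ^ n 0 • ν ∉ S ⊔ (x 0 ^ (n 0 + 1)) • ⊤ ⊔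
        Ideal.span (Set.range (Fin.tail x)) • ⊤ := by
      rw [sup_right_comm]
      exact pow_smul_notMem_sup_pow_succ_smul_top hx.isSMulRegular_quotient_head hν _
    rw [Fin.prod_univ_succ, mul_comm, mul_smul, Fin.range_fin_succ, span_insert_smul_top,
      ← sup_assoc]
    exact ih (hx'.sup_pow_smul_top hx₀ (n 0 + 1)) hν₀ (Fin.tail n)

end IsWeaklyRegularMod

end

theorem prod_pow_smul_not_mem_span_pow_succ (R : Type*) [CommRing R] (N : Type*)
    [AddCommGroup N] [Module R N] (t : ℕ) (x : Fin t → R)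
    (hreg : ∀ i : Fin t, Function.Injective
      (fun q : N ⧸ (Ideal.span (x '' {j | j < i}) • ⊤ : Submodule R N) => x i • q))
    (ν : N) (hν : ν ∉ (Ideal.span (Set.range x) • ⊤ : Submodule R N)) (n : Fin t → ℕ) :
    (∏ i, x i ^ n i) • ν ∉
      (Ideal.span (Set.range fun i => x i ^ (n i + 1)) • ⊤ : Submodule R N) := by
  have hx : IsWeaklyRegularMod (⊥ : Submodule R N) x := by
    intro i
    rw [bot_sup_eq]
    exact hreg i
  simpa only [bot_sup_eq] using hx.prod_pow_smul_notMem (by rwa [bot_sup_eq]) n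
end
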